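/- The pairing h^{Sp}_n is a symmetric bilinear form on K^{2n}; its radical is exactly the line K·(1,1,…,1); and the induced nondegenerate symmetric bilinear form on the quotient K^{2n}/K·(1,…,1) has discriminant 2^{2n−1}(−1)^{n−1} modulo squares, i.e. for any basis of the quotient the Gram determinant of the induced form equals 2^{2n−1}(−1)^{n−1}·c² for some c ∈ K^×. -/

import Mathlib

open Finset

/-- Extract the `k`-th coordinate (with 1-based subscripts `1 ≤ k ≤ N`) of a
vector `x ∈ K^N`, returning `0` for out-of-range subscripts. -/
def coordFn {K : Type*} [Zero K] (N : ℕ) (x : Fin N → K) (k : ℕ) : K :=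
  if hk : 1 ≤ k ∧ k ≤ N then x ⟨k - 1, by omega⟩ else 0

/-- The symmetric bilinear form `h^{Sp}_n` on `K^{2n}` attached to the affine generic
stratum of the symplectic group `Sp_{2n}`:
`h^{Sp}_n(x,y) = (1/2)[(x_1 − x_{2n})y_1 + Σ_{i=2}^{2n}(x_{2n+2−i} − x_{2n+1−i})y_i]`. -/
def hSp {K : Type*} [Field K] (n : ℕ) (x y : Fin (2 * n) → K) : K :=
  let X := coordFn (2 * n) x
  let Y := coordFn (2 * n) y
  (2 : K)⁻¹ *
    ((X 1 - X (2 * n)) * Y 1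
      + ∑ i ∈ Finset.Icc 2 (2 * n), (X (2 * n + 2 - i) - X (2 * n + 1 - i)) * Y i)

/-- The line `K·(1,…,1)` in `K^N`. -/
def allOnesLine (K : Type*) [Field K] (N : ℕ) : Submodule K (Fin N → K) :=
  Submodule.span K {fun _ => (1 : K)}

/-! In `0`-based indices read modulo `N = 2n`, `2 h(x, y) = ∑ᵢ (x₋ᵢ - x₋ᵢ₋₁) yᵢ`: the
coefficient of `xⱼ yᵢ` depends only on `i + j`, so the form is symmetric, and pairing with the
unit vectors shows that `x` lies in the radical iff `xₖ = xₖ₋₁` for all `k`, i.e. iff `x` is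
constant. For the discriminant, the indicators `vⱼ` of the initial segments `[0, j]`, `j < N - 1`,
have Gram matrix `½ [j + l < N - 1]`, which is anti-triangular with determinant
`(-1)^((N-1)/2) 2^(1-N)`. Writing the `vⱼ` modulo the radical in any basis `b` of the quotient
by a matrix `D` gives `det Gram(v) = (det D)² det Gram(b)`. -/

theorem Fin.neg_sub_one_eq_rev {m : ℕ} (i : Fin (m + 1)) : -i - 1 = i.rev := by
  rw [← Fin.last_sub, eq_neg_of_add_eq_zero_left (Fin.last_add_one m)]
  abel

theorem Fin.neg_succ_eq_rev_castSucc {m : ℕ} (i : Fin m) : -i.succ = i.castSucc.rev := by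
  rw [← Fin.neg_sub_one_eq_rev, ← Fin.coeSucc_eq_succ]
  abel

theorem Fin.apply_eq_apply_zero_of_apply_sub_one {N : ℕ} [NeZero N] {α : Type*}
    {x : Fin N → α} (h : ∀ k, x (k - 1) = x k) (k : Fin N) : x k = x 0 := by
  obtain ⟨m, rfl⟩ : ∃ m, N = m + 1 := Nat.exists_eq_succ_of_ne_zero (NeZero.ne N)
  induction k using Fin.induction with
  | zero => rfl
  | succ i ih => rw [← h, ← Fin.coeSucc_eq_succ, add_sub_cancel_right, ih]

theorem Submodule.exists_sub_sum_smul_mem {R V κ : Type*} [Ring R] [AddCommGroup V] [Module R V]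
    [Fintype κ] {W : Submodule R V} {b : κ → V}
    (hb : span R (Set.range fun k => W.mkQ (b k)) = ⊤) (v : V) :
    ∃ c : κ → R, v - ∑ k, c k • b k ∈ W := by
  obtain ⟨c, hc⟩ := (mem_span_range_iff_exists_fun R).mp (hb ▸ mem_top : W.mkQ v ∈ _)
  refine ⟨c, ?_⟩
  rw [← Quotient.mk_eq_zero, ← W.mkQ_apply, map_sub, map_sum, ← hc]
  simp

namespace LinearMap.BilinForm

variable {R K V : Type*} [CommRing R] [Field K] [AddCommGroup V] {ι κ : Type*} [Fintype κ]

def gram [Module R V] (B : LinearMap.BilinForm R V) (v : ι → V) : Matrix ι ι R :=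
  Matrix.of fun i j => B (v i) (v j)

theorem gram_eq_mul_gram_mul_transpose [Module R V] {B : LinearMap.BilinForm R V}
    (hB : B.IsSymm) {v : ι → V} {b : κ → V} (D : Matrix ι κ R)
    (hD : ∀ i, v i - ∑ k, D i k • b k ∈ LinearMap.ker B) :
    B.gram v = D * B.gram b * D.transpose := by
  have hv : ∀ i y, B (v i) y = B (∑ k, D i k • b k) y := fun i y => by
    rw [← sub_eq_zero, ← LinearMap.sub_apply, ← map_sub, LinearMap.mem_ker.mp (hD i),
      LinearMap.zero_apply]
  ext i j
  rw [gram, Matrix.of_apply, hv, hB.eq, hv, hB.eq]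
  simp [gram, Matrix.mul_apply, Finset.mul_sum, mul_comm, mul_left_comm]

theorem exists_det_gram_eq_mul_sq [Module K V] [Fintype ι] [DecidableEq ι]
    {B : LinearMap.BilinForm K V} (hB : B.IsSymm) {W : Submodule K V}
    (hW : W ≤ LinearMap.ker B) {v b : ι → V}
    (hb : Submodule.span K (Set.range fun i => W.mkQ (b i)) = ⊤) (hv : (B.gram v).det ≠ 0) :
    ∃ c : K, c ≠ 0 ∧ (B.gram b).det = (B.gram v).det * c ^ 2 := by
  choose D hD using fun i => Submodule.exists_sub_sum_smul_mem hb (v i)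
  change Matrix ι ι K at D
  have hdet : (B.gram v).det = D.det * (B.gram b).det * D.det := by
    rw [gram_eq_mul_gram_mul_transpose hB D fun i => hW (hD i), Matrix.det_mul, Matrix.det_mul,
      Matrix.det_transpose]
  have hD0 : D.det ≠ 0 := fun h => hv (by rw [hdet, h, zero_mul, zero_mul])
  refine ⟨D.det⁻¹, inv_ne_zero hD0, ?_⟩
  rw [hdet]
  field_simp

end LinearMap.BilinForm

def upperLeftTriangle (R : Type*) [Zero R] [One R] (m : ℕ) : Matrix (Fin m) (Fin m) R :=
  Matrix.of fun i j => if (i : ℕ) + j < m then 1 else 0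

theorem neg_one_pow_mul_neg_one_pow_div_two {R : Type*} [Monoid R] [HasDistribNeg R] (m : ℕ) :
    (-1 : R) ^ m * (-1) ^ (m / 2) = (-1) ^ ((m + 1) / 2) := by
  rcases Nat.even_or_odd' m with ⟨c, rfl | rfl⟩
  · rw [show (2 * c + 1) / 2 = c by omega, show 2 * c / 2 = c by omega, pow_mul, neg_one_sq,
      one_pow, one_mul]
  · rw [show (2 * c + 1 + 1) / 2 = c + 1 by omega, show (2 * c + 1) / 2 = c by omega, pow_succ,
      pow_mul, neg_one_sq, one_pow, one_mul, pow_succ, neg_one_mul, mul_neg_one]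

theorem det_upperLeftTriangle (R : Type*) [CommRing R] (m : ℕ) :
    (upperLeftTriangle R m).det = (-1) ^ (m / 2) := by
  induction m with
  | zero => simp
  | succ m ih =>
    have hrow : ∀ j ≠ 0, upperLeftTriangle R (m + 1) (Fin.last m) j = 0 := fun j hj => by
      simp [upperLeftTriangle, Fin.val_ne_zero_iff.mpr hj]
    have hminor :
        (upperLeftTriangle R (m + 1)).submatrix (Fin.last m).succAbove (Fin.succAbove 0)
          = upperLeftTriangle R m := by
      ext i j
      simp only [upperLeftTriangle, Matrix.submatrix_apply, Matrix.of_apply, Fin.succAbove_last,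
        Fin.succAbove_zero, Fin.val_castSucc, Fin.val_succ]
      congr 1
      simp only [eq_iff_iff]
      omega
    rw [Matrix.det_succ_row _ (Fin.last m), Fintype.sum_eq_single 0 fun j hj => by
      rw [hrow j hj, mul_zero, zero_mul], hminor, ih]
    simp [upperLeftTriangle, neg_one_pow_mul_neg_one_pow_div_two]

section CyclicDifference

variable {K : Type*} [Field K] {N : ℕ} [NeZero N]

variable (K N) in
def cyclicDiffForm : LinearMap.BilinForm K (Fin N → K) :=
  LinearMap.mk₂ K (fun x y => 2⁻¹ * ∑ i, (x (-i) - x (-i - 1)) * y i)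
    (fun _ _ _ => by
      simp only [Pi.add_apply, mul_sum, ← sum_add_distrib]
      exact sum_congr rfl fun _ _ => by ring)
    (fun _ _ _ => by
      simp only [Pi.smul_apply, smul_eq_mul, mul_sum]; exact sum_congr rfl fun _ _ => by ring)
    (fun _ _ _ => by
      simp only [Pi.add_apply, mul_sum, ← sum_add_distrib]
      exact sum_congr rfl fun _ _ => by ring)
    (fun _ _ _ => by
      simp only [Pi.smul_apply, smul_eq_mul, mul_sum]; exact sum_congr rfl fun _ _ => by ring)

theorem cyclicDiffForm_apply (x y : Fin N → K) :
    cyclicDiffForm K N x y = 2⁻¹ * ∑ i, (x (-i) - x (-i - 1)) * y i := rfl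

theorem cyclicDiffForm_apply_eq_sum_sub_one (x y : Fin N → K) :
    cyclicDiffForm K N x y = 2⁻¹ * ∑ k, (x k - x (k - 1)) * y (-k) := by
  rw [cyclicDiffForm_apply]
  congr 1
  exact Fintype.sum_equiv (Equiv.neg _) _ _ fun i => by simp [sub_eq_add_neg]

theorem cyclicDiffForm_isSymm : (cyclicDiffForm K N).IsSymm := by
  refine ⟨fun x y => ?_⟩
  simp only [cyclicDiffForm_apply, sub_mul, sum_sub_distrib]
  congr 2
  · exact Fintype.sum_equiv (Equiv.neg _) _ _ fun i => by simp [mul_comm]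
  · exact Fintype.sum_equiv ((Equiv.neg _).trans (Equiv.subRight 1)) _ _ fun i => by
      simp [mul_comm]

theorem ker_cyclicDiffForm (h2 : (2 : K) ≠ 0) :
    LinearMap.ker (cyclicDiffForm K N) = allOnesLine K N := by
  ext x
  rw [LinearMap.mem_ker, allOnesLine, Submodule.mem_span_singleton]
  constructor
  · intro hx
    have hstep : ∀ k, x (k - 1) = x k := fun k => by
      have := LinearMap.congr_fun hx (Pi.single (-k) 1)
      simp [cyclicDiffForm_apply, Pi.single_apply, h2, sub_eq_zero] at this
      exact this.symm
    exact ⟨x 0, funext fun k => by simp [Fin.apply_eq_apply_zero_of_apply_sub_one hstep k]⟩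
  · rintro ⟨a, rfl⟩
    ext y
    simp [cyclicDiffForm_apply]

def initialSegment (R : Type*) [Zero R] [One R] {N : ℕ} (j : ℕ) : Fin N → R :=
  fun i => if (i : ℕ) ≤ j then 1 else 0

theorem initialSegment_sub_initialSegment_sub_one (j : ℕ) (hj : j + 1 < N) (k : Fin N) :
    initialSegment K j k - initialSegment K j (k - 1)
      = (if k = 0 then 1 else 0) - (if k = ⟨j + 1, hj⟩ then 1 else 0) := by
  obtain ⟨m, rfl⟩ : ∃ m, N = m + 1 := Nat.exists_eq_succ_of_ne_zero (NeZero.ne N)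
  simp only [initialSegment, Fin.coe_sub_one, Fin.ext_iff, Fin.val_zero]
  split_ifs <;> first | omega | simp

theorem cyclicDiffForm_initialSegment_left (j : ℕ) (hj : j + 1 < N) (y : Fin N → K) :
    cyclicDiffForm K N (initialSegment K j) y = 2⁻¹ * (y 0 - y (-⟨j + 1, hj⟩)) := by
  simp only [cyclicDiffForm_apply_eq_sum_sub_one, initialSegment_sub_initialSegment_sub_one j hj,
    sub_mul, ite_mul, one_mul, zero_mul, sum_sub_distrib, sum_ite_eq', mem_univ, if_true,
    neg_zero]

theorem cyclicDiffForm_initialSegment (j l : ℕ) (hj : j + 1 < N) :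
    cyclicDiffForm K N (initialSegment K j) (initialSegment K l)
      = if j + l + 1 < N then 2⁻¹ else 0 := by
  rw [cyclicDiffForm_initialSegment_left j hj]
  simp only [initialSegment, Fin.val_neg, Fin.ext_iff, Fin.val_zero, Nat.add_one_ne_zero,
    if_false, zero_le, if_true]
  split_ifs <;> first | omega | ring

theorem gram_cyclicDiffForm_initialSegment :
    (cyclicDiffForm K N).gram (fun j : Fin (N - 1) => initialSegment K j)
      = (2⁻¹ : K) • upperLeftTriangle K (N - 1) := by
  ext j l
  rw [LinearMap.BilinForm.gram, Matrix.of_apply, cyclicDiffForm_initialSegment j l (by omega)]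
  simp only [upperLeftTriangle, Matrix.smul_apply, Matrix.of_apply, smul_eq_mul]
  split_ifs <;> first | omega | simp

theorem exists_det_gram_cyclicDiffForm (h2 : (2 : K) ≠ 0) {b : Fin (N - 1) → Fin N → K}
    (hb : Submodule.span K (Set.range fun i => (allOnesLine K N).mkQ (b i)) = ⊤) :
    ∃ c : K, c ≠ 0 ∧
      ((cyclicDiffForm K N).gram b).det = 2 ^ (N - 1) * (-1) ^ ((N - 1) / 2) * c ^ 2 := by
  have hv : ((cyclicDiffForm K N).gram fun j : Fin (N - 1) => initialSegment K j).det
      = 2⁻¹ ^ (N - 1) * (-1) ^ ((N - 1) / 2) := by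
    rw [gram_cyclicDiffForm_initialSegment, Matrix.det_smul, det_upperLeftTriangle,
      Fintype.card_fin]
  obtain ⟨c, hc, hdet⟩ := LinearMap.BilinForm.exists_det_gram_eq_mul_sq cyclicDiffForm_isSymm
    (ker_cyclicDiffForm h2).ge hb
    (by rw [hv]; exact mul_ne_zero (pow_ne_zero _ (inv_ne_zero h2)) (by simp))
  refine ⟨2⁻¹ ^ (N - 1) * c, mul_ne_zero (pow_ne_zero _ (inv_ne_zero h2)) hc, ?_⟩
  have h2pow : (2 : K) ^ (N - 1) * 2⁻¹ ^ (N - 1) = 1 := by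
    rw [← mul_pow, mul_inv_cancel₀ h2, one_pow]
  rw [hdet, hv]
  linear_combination (-(2⁻¹ ^ (N - 1) * (-1) ^ ((N - 1) / 2) * c ^ 2)) * h2pow

end CyclicDifference

theorem coordFn_eq_apply {K : Type*} [Zero K] {N : ℕ} (x : Fin N → K) (i : Fin N) {k : ℕ}
    (hk : k = i + 1) : coordFn N x k = x i := by
  subst hk
  rw [coordFn, dif_pos ⟨by omega, i.isLt⟩]
  rfl

theorem sum_coordFn_eq_sum_neg {K : Type*} [CommRing K] (N : ℕ) [NeZero N]
    (x y : Fin N → K) :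
    (coordFn N x 1 - coordFn N x N) * coordFn N y 1
      + ∑ i ∈ Icc 2 N, (coordFn N x (N + 2 - i) - coordFn N x (N + 1 - i)) * coordFn N y i
      = ∑ i, (x (-i) - x (-i - 1)) * y i := by
  obtain ⟨m, rfl⟩ : ∃ m, N = m + 1 := Nat.exists_eq_succ_of_ne_zero (NeZero.ne N)
  have hIcc (f : ℕ → K) : ∑ i ∈ Icc 2 (m + 1), f i = ∑ i : Fin m, f (2 + i) := by
    rw [← Ico_add_one_right_eq_Icc, sum_Ico_eq_sum_range, show m + 1 + 1 - 2 = m by omega,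
      Fin.sum_univ_eq_sum_range (fun i => f (2 + i))]
  rw [Fin.sum_univ_succ, hIcc]
  simp only [Fin.neg_sub_one_eq_rev]
  simp only [neg_zero, Fin.neg_succ_eq_rev_castSucc]
  congr 1
  · rw [coordFn_eq_apply x 0 (k := 1) rfl,
      coordFn_eq_apply x (Fin.rev 0) (k := m + 1) (by simp), coordFn_eq_apply y 0 (k := 1) rfl]
  · refine sum_congr rfl fun i _ => ?_
    rw [coordFn_eq_apply x i.castSucc.rev (by simp [Fin.val_rev]; omega),
      coordFn_eq_apply x i.succ.rev (by simp [Fin.val_rev]; omega),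
      coordFn_eq_apply y i.succ (by simp; omega)]

theorem hSp_eq_cyclicDiffForm {K : Type*} [Field K] (n : ℕ) [NeZero (2 * n)]
    (x y : Fin (2 * n) → K) : hSp n x y = cyclicDiffForm K (2 * n) x y := by
  rw [cyclicDiffForm_apply, ← sum_coordFn_eq_sum_neg]
  rfl

/-- `h^{Sp}_n` is a symmetric bilinear form on `K^{2n}`; its radical is
exactly the line `K·(1,…,1)`; and the induced nondegenerate symmetric bilinear form on
the quotient `K^{2n}/K·(1,…,1)` has discriminant `2^{2n−1}(−1)^{n−1}` modulo squares:
for any basis of the quotient the Gram determinant of the induced form equals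
`2^{2n−1}(−1)^{n−1}·c²` for some `c ∈ K^×`. -/
theorem hSp_symm_radical_discriminant
    (K : Type) [Field K] (h2 : (2 : K) ≠ 0) (n : ℕ) (hn : 1 ≤ n) :
    (∀ x y : Fin (2 * n) → K, hSp n x y = hSp n y x) ∧
    (∀ (a : K) (x x' y : Fin (2 * n) → K),
        hSp n (a • x + x') y = a * hSp n x y + hSp n x' y) ∧
    (∀ (a : K) (x y y' : Fin (2 * n) → K),
        hSp n x (a • y + y') = a * hSp n x y + hSp n x y') ∧
    ({x : Fin (2 * n) → K | ∀ y, hSp n x y = 0}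
        = (allOnesLine K (2 * n) : Set (Fin (2 * n) → K))) ∧
    (∀ b : Fin (2 * n - 1) → (Fin (2 * n) → K),
        LinearIndependent K (fun i => (allOnesLine K (2 * n)).mkQ (b i)) →
        Submodule.span K (Set.range fun i => (allOnesLine K (2 * n)).mkQ (b i)) = ⊤ →
        ∃ c : K, c ≠ 0 ∧
          (Matrix.of fun i j => hSp n (b i) (b j)).det
            = 2 ^ (2 * n - 1) * (-1) ^ (n - 1) * c ^ 2) := by
  have : NeZero (2 * n) := ⟨by omega⟩
  simp only [hSp_eq_cyclicDiffForm]
  refine ⟨cyclicDiffForm_isSymm.eq, fun a x x' y => by simp, fun a x y y' => by simp, ?_,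
    fun b _ hb => ?_⟩
  · rw [← ker_cyclicDiffForm h2]
    ext x
    simp [LinearMap.ext_iff]
  · obtain ⟨c, hc, hdet⟩ := exists_det_gram_cyclicDiffForm h2 hb
    exact ⟨c, hc, by rwa [show (2 * n - 1) / 2 = n - 1 by omega] at hdet⟩
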